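/- Let F be a field of characteristic different from 2. For every i with 1 ≤ i ≤ n, the annihilator {Y ∈ sp_{2n}(F) : tr(X·Y) = 0 for all X ∈ u_i(F)} of u_i(F) in sp_{2n}(F) under the trace form equals p_i(F). -/

import Mathlib

open Matrix

/-- The matrix `J = [[0, I'ₙ],[−I'ₙ, 0]]` where `I'ₙ` is the antidiagonal identity. -/
def Jmat (R : Type*) [CommRing R] (n : ℕ) : Matrix (Fin (2*n)) (Fin (2*n)) R :=
  Matrix.of fun i j =>
    if (i : ℕ) + (j : ℕ) = 2*n - 1 then (if (i : ℕ) < n then (1 : R) else -1) else 0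

/-- The symplectic group `Sp_{2n}(R)` as a set of matrices. -/
def SpSet (n : ℕ) (R : Type*) [CommRing R] : Set (Matrix (Fin (2*n)) (Fin (2*n)) R) :=
  {g | IsUnit g.det ∧ g * Jmat R n * gᵀ = Jmat R n}

/-- The symplectic Lie algebra `sp_{2n}(R)` as a set of matrices. -/
def spSet (n : ℕ) (R : Type*) [CommRing R] : Set (Matrix (Fin (2*n)) (Fin (2*n)) R) :=
  {X | X * Jmat R n + Jmat R n * Xᵀ = 0}


/-- The span of the first `i` standard basis vectors of `F^{2n}`. -/
def firstSpan (n i : ℕ) (F : Type*) [Field F] : Submodule F (Fin (2*n) → F) :=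
  Submodule.span F {v | ∃ j : Fin (2*n), (j : ℕ) < i ∧ v = Pi.single j (1 : F)}

/-- `p_i(F)`: elements of `sp_{2n}(F)` mapping the span of the first `i` standard basis
vectors into itself. -/
def pSet (n i : ℕ) (F : Type*) [Field F] : Set (Matrix (Fin (2*n)) (Fin (2*n)) F) :=
  {X | X ∈ spSet n F ∧ ∀ v ∈ firstSpan n i F, X.mulVec v ∈ firstSpan n i F}

/-- `u_i(F)`: elements of `sp_{2n}(F)` supported in the blocks
`[[0,A,B,C],[0,0,0,*],[0,0,0,*],[0,0,0,0]]` with row/column block sizes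
`(i, n−i, n−i, i)`. -/
def uSet (n i : ℕ) (F : Type*) [Field F] : Set (Matrix (Fin (2*n)) (Fin (2*n)) F) :=
  {X | X ∈ spSet n F ∧ ∀ a b : Fin (2*n), X a b ≠ 0 →
      (((a : ℕ) < i ∧ i ≤ (b : ℕ)) ∨ ((a : ℕ) < 2*n - i ∧ 2*n - i ≤ (b : ℕ)))}

/-!
The map `θ X = J Xᵀ J⁻¹` is an involution with `sp_{2n} = {X | θ X = -X}`, and
`tr (θ X * Y) = -tr (X * Y)` for `Y ∈ sp_{2n}`. Hence for `a < i ≤ b` the element `E_ab - θ E_ab`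
lies in `u_i` and pairs with `Y ∈ sp_{2n}` to `2 Y_ba`, so an annihilating `Y` has zero lower-left
block, i.e. preserves `⟨e_1, …, e_i⟩`. Conversely, `u_i` is supported on the entries `(a, b)` with
`a < i ≤ b` and on their mirror images `(rev b, rev a)`; since `Y_(rev b, rev a) = ± Y_ab` on
`sp_{2n}`, every `Y ∈ p_i` has `Y_ba = 0` there, so the trace pairing vanishes.
-/
section Symplectic

variable {R : Type*} [CommRing R] {n : ℕ}

def jSign (R : Type*) [CommRing R] (n : ℕ) (a : Fin (2*n)) : R := if (a : ℕ) < n then 1 else -1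

lemma jSign_rev (a : Fin (2*n)) : jSign R n a.rev = -jSign R n a := by
  have := a.isLt
  by_cases h : (a : ℕ) < n
  · simp [jSign, Fin.val_rev, h, show ¬(2*n - (a + 1) < n) by omega]
  · simp [jSign, Fin.val_rev, h, show 2*n - (a + 1) < n by omega]

lemma jSign_mul_self (a : Fin (2*n)) : jSign R n a * jSign R n a = 1 := by
  unfold jSign; split_ifs <;> simp

lemma Jmat_apply (a b : Fin (2*n)) : Jmat R n a b = if b = a.rev then jSign R n a else 0 := by
  have hb := b.isLt
  have : (a : ℕ) + b = 2*n - 1 ↔ b = a.rev := by rw [Fin.ext_iff, Fin.val_rev]; omega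
  simp only [Jmat, of_apply, jSign, this]

lemma Jmat_mul_apply (M : Matrix (Fin (2*n)) (Fin (2*n)) R) (a b : Fin (2*n)) :
    (Jmat R n * M) a b = jSign R n a * M a.rev b := by
  simp [mul_apply, Jmat_apply, ite_mul]

lemma mul_Jmat_apply (M : Matrix (Fin (2*n)) (Fin (2*n)) R) (a b : Fin (2*n)) :
    (M * Jmat R n) a b = -(jSign R n b * M a b.rev) := by
  simp [mul_apply, Jmat_apply, mul_ite, ← Fin.rev_eq_iff, jSign_rev, mul_comm]

lemma Jmat_mul_Jmat : Jmat R n * Jmat R n = -1 := by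
  ext a b
  rw [Jmat_mul_apply, Jmat_apply, Fin.rev_rev, jSign_rev]
  by_cases h : a = b
  · simp [h, jSign_mul_self]
  · simp [h, Ne.symm h]

lemma Jmat_transpose : (Jmat R n)ᵀ = -Jmat R n := by
  ext a b
  rw [transpose_apply, neg_apply, Jmat_apply, Jmat_apply]
  by_cases h : b = a.rev
  · simp [h, jSign_rev]
  · simp [h, ← Fin.rev_eq_iff, Ne.symm h]

/-- `J Xᵀ J⁻¹`, written with `J⁻¹ = -J`. -/
def symplecticAdjoint (X : Matrix (Fin (2*n)) (Fin (2*n)) R) : Matrix (Fin (2*n)) (Fin (2*n)) R :=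
  -(Jmat R n * Xᵀ * Jmat R n)

lemma symplecticAdjoint_apply (X : Matrix (Fin (2*n)) (Fin (2*n)) R) (a b : Fin (2*n)) :
    symplecticAdjoint X a b = jSign R n a * jSign R n b * X b.rev a.rev := by
  rw [symplecticAdjoint, neg_apply, mul_Jmat_apply, Jmat_mul_apply, transpose_apply]
  ring

lemma symplecticAdjoint_sub (X Y : Matrix (Fin (2*n)) (Fin (2*n)) R) :
    symplecticAdjoint (X - Y) = symplecticAdjoint X - symplecticAdjoint Y := by
  simp only [symplecticAdjoint, transpose_sub, Matrix.mul_sub, Matrix.sub_mul, neg_sub_neg]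
  abel

lemma symplecticAdjoint_symplecticAdjoint (X : Matrix (Fin (2*n)) (Fin (2*n)) R) :
    symplecticAdjoint (symplecticAdjoint X) = X := by
  simp only [symplecticAdjoint, transpose_neg, transpose_mul, transpose_transpose, Jmat_transpose,
    Matrix.mul_neg, Matrix.neg_mul, neg_neg, ← Matrix.mul_assoc, Jmat_mul_Jmat]
  simp [Matrix.mul_assoc, Jmat_mul_Jmat]

lemma mem_spSet_iff_symplecticAdjoint {X : Matrix (Fin (2*n)) (Fin (2*n)) R} :
    X ∈ spSet n R ↔ symplecticAdjoint X = -X := by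
  change _ + _ = 0 ↔ _
  rw [symplecticAdjoint, neg_inj, add_eq_zero_iff_eq_neg']
  constructor
  · intro h
    rw [h, Matrix.neg_mul, Matrix.mul_assoc, Jmat_mul_Jmat]
    simp
  · intro h
    calc Jmat R n * Xᵀ = -(Jmat R n * Xᵀ * Jmat R n * Jmat R n) := by
          rw [Matrix.mul_assoc _ (Jmat R n), Jmat_mul_Jmat]; simp
      _ = -(X * Jmat R n) := by rw [h]

lemma sub_symplecticAdjoint_mem_spSet (X : Matrix (Fin (2*n)) (Fin (2*n)) R) :
    X - symplecticAdjoint X ∈ spSet n R := by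
  rw [mem_spSet_iff_symplecticAdjoint, symplecticAdjoint_sub, symplecticAdjoint_symplecticAdjoint,
    neg_sub]

lemma trace_symplecticAdjoint_mul {Y : Matrix (Fin (2*n)) (Fin (2*n)) R} (hY : Y ∈ spSet n R)
    (X : Matrix (Fin (2*n)) (Fin (2*n)) R) :
    (symplecticAdjoint X * Y).trace = -(X * Y).trace := by
  have hJYJ : Jmat R n * Y * Jmat R n = Yᵀ := by
    have h := congrArg transpose (neg_inj.1 (mem_spSet_iff_symplecticAdjoint.1 hY))
    simpa [transpose_mul, Jmat_transpose, Matrix.mul_assoc] using h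
  calc (symplecticAdjoint X * Y).trace = -(Xᵀ * (Jmat R n * Y * Jmat R n)).trace := by
        rw [symplecticAdjoint, Matrix.neg_mul, trace_neg, Matrix.mul_assoc, Matrix.mul_assoc,
          trace_mul_comm (Jmat R n)]
        simp only [Matrix.mul_assoc]
    _ = -(X * Y).trace := by rw [hJYJ, trace_transpose_mul]

lemma trace_sub_symplecticAdjoint_mul {Y : Matrix (Fin (2*n)) (Fin (2*n)) R}
    (hY : Y ∈ spSet n R) (X : Matrix (Fin (2*n)) (Fin (2*n)) R) :
    ((X - symplecticAdjoint X) * Y).trace = 2 * (X * Y).trace := by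
  rw [Matrix.sub_mul, trace_sub, trace_symplecticAdjoint_mul hY]
  ring

lemma apply_rev_rev_of_mem_spSet {Y : Matrix (Fin (2*n)) (Fin (2*n)) R} (hY : Y ∈ spSet n R)
    (a b : Fin (2*n)) : Y b.rev a.rev = -(jSign R n a * jSign R n b) * Y a b := by
  have := congrFun₂ (mem_spSet_iff_symplecticAdjoint.1 hY) a b
  rw [symplecticAdjoint_apply, neg_apply] at this
  calc Y b.rev a.rev
      = jSign R n a * jSign R n a * (jSign R n b * jSign R n b) * Y b.rev a.rev := by
        rw [jSign_mul_self, jSign_mul_self, one_mul, one_mul]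
    _ = jSign R n a * jSign R n b * (jSign R n a * jSign R n b * Y b.rev a.rev) := by ring
    _ = -(jSign R n a * jSign R n b) * Y a b := by rw [this]; ring

end Symplectic

section Parabolic

variable {F : Type*} [Field F] {n i : ℕ}

lemma mem_firstSpan_iff {v : Fin (2*n) → F} :
    v ∈ firstSpan n i F ↔ ∀ j : Fin (2*n), i ≤ (j : ℕ) → v j = 0 := by
  constructor
  · intro hv
    induction hv using Submodule.span_induction with
    | mem w hw =>
      obtain ⟨k, hk, rfl⟩ := hw
      intro j hj
      exact Pi.single_eq_of_ne (by omega) _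
    | zero => simp
    | add w w' _ _ hw hw' => intro j hj; simp [hw j hj, hw' j hj]
    | smul c w _ hw => intro j hj; simp [hw j hj]
  · intro hv
    rw [← Finset.univ_sum_single v]
    refine Submodule.sum_mem _ fun j _ => ?_
    by_cases hj : (j : ℕ) < i
    · have hsingle : Pi.single j (v j) = v j • Pi.single j (1 : F) := by
        rw [← Pi.single_smul', smul_eq_mul, mul_one]
      rw [hsingle]
      exact Submodule.smul_mem _ _ (Submodule.subset_span ⟨j, hj, rfl⟩)
    · simp [hv j (by omega)]

lemma forall_mulVec_mem_firstSpan_iff {Y : Matrix (Fin (2*n)) (Fin (2*n)) F} :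
    (∀ v ∈ firstSpan n i F, Y *ᵥ v ∈ firstSpan n i F) ↔
      ∀ a b : Fin (2*n), (a : ℕ) < i → i ≤ (b : ℕ) → Y b a = 0 := by
  simp only [mem_firstSpan_iff]
  constructor
  · intro h a b ha hb
    simpa using h (Pi.single a (1 : F)) (fun j hj => Pi.single_eq_of_ne (by omega) _) b hb
  · intro h v hv j hj
    simp only [mulVec, dotProduct]
    refine Finset.sum_eq_zero fun k _ => ?_
    by_cases hk : (k : ℕ) < i
    · rw [h k j hk hj, zero_mul]
    · rw [hv k (by omega), mul_zero]

lemma trace_mul_eq_zero_of_mem_uSet {X Y : Matrix (Fin (2*n)) (Fin (2*n)) F}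
    (hY : Y ∈ spSet n F) (hYp : ∀ a b : Fin (2*n), (a : ℕ) < i → i ≤ (b : ℕ) → Y b a = 0)
    (hX : X ∈ uSet n i F) :
    (X * Y).trace = 0 := by
  refine Finset.sum_eq_zero fun p _ => ?_
  rw [diag_apply, mul_apply]
  refine Finset.sum_eq_zero fun q _ => ?_
  by_cases hpq : X p q = 0
  · rw [hpq, zero_mul]
  rcases hX.2 p q hpq with ⟨hp, hq⟩ | ⟨hp, hq⟩
  · rw [hYp p q hp hq, mul_zero]
  · have := p.isLt
    rw [← Fin.rev_rev q, ← Fin.rev_rev p, apply_rev_rev_of_mem_spSet hY,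
      hYp q.rev p.rev (by rw [Fin.val_rev]; omega) (by rw [Fin.val_rev]; omega)]
    simp

lemma single_sub_symplecticAdjoint_mem_uSet {a b : Fin (2*n)} (ha : (a : ℕ) < i)
    (hb : i ≤ (b : ℕ)) :
    single a b (1 : F) - symplecticAdjoint (single a b 1) ∈ uSet n i F := by
  refine ⟨sub_symplecticAdjoint_mem_spSet _, fun p q hpq => ?_⟩
  rw [Matrix.sub_apply, symplecticAdjoint_apply] at hpq
  by_cases hab : a = p ∧ b = q
  · exact Or.inl ⟨hab.1 ▸ ha, hab.2 ▸ hb⟩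
  by_cases hab' : a = q.rev ∧ b = p.rev
  · have := b.isLt
    refine Or.inr ⟨?_, ?_⟩
    · rw [← Fin.rev_rev p, ← hab'.2, Fin.val_rev]; omega
    · rw [← Fin.rev_rev q, ← hab'.1, Fin.val_rev]; omega
  simp [single_apply_of_ne (h := hab), single_apply_of_ne (h := hab')] at hpq

end Parabolic

theorem stmt8_general (n : ℕ) (F : Type*) [Field F] (h2 : (2 : F) ≠ 0) :
    ∀ i : ℕ, 1 ≤ i → i ≤ n →
      {Y | Y ∈ spSet n F ∧ ∀ X ∈ uSet n i F, (X * Y).trace = 0} = pSet n i F := by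
  intro i _ _
  ext Y
  change _ ∧ _ ↔ _ ∧ _
  rw [forall_mulVec_mem_firstSpan_iff]
  refine and_congr_right fun hY =>
    ⟨fun hann a b ha hb => ?_, fun hYp X hX => trace_mul_eq_zero_of_mem_uSet hY hYp hX⟩
  have h := hann _ (single_sub_symplecticAdjoint_mem_uSet ha hb)
  rw [trace_sub_symplecticAdjoint_mul hY, trace_single_mul, one_smul] at h
  exact (mul_eq_zero.1 h).resolve_left h2

/-- The annihilator of `u_i(F)` in `sp_{2n}(F)` under the trace form equals `p_i(F)`. -/
theorem stmt8 (n : ℕ) (hn : 1 ≤ n) (F : Type*) [Field F] (h2 : (2 : F) ≠ 0) :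
    ∀ i : ℕ, 1 ≤ i → i ≤ n →
      {Y | Y ∈ spSet n F ∧ ∀ X ∈ uSet n i F, (X * Y).trace = 0} = pSet n i F :=
  stmt8_general n F h2
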